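/- arXiv:1810.12599 — 2 statements merged into one kernel-verified Lean document; each statement's English description precedes it below -/
import Mathlib

section
/- For every τ ∈ A₀, every b ∈ I_τ and all z, z′ ∈ X, one has |z + b| ≥ √(5/4) and |1/(z + b) − 1/(z′ + b)| ≤ (4/5)·|z − z′|; in particular the system S_τ is uniformly contractive on X with contraction constant 4/5. -/
open Complex Metric Filter Set
open scoped ENNReal NNReal Topology

noncomputable section

/-- The parameter space `A₀ = {u+iv : u ≥ 0, v ≥ 1}`. -/
def A0 : Set ℂ := {τ : ℂ | 0 ≤ τ.re ∧ 1 ≤ τ.im}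

/-- The phase space `X = {z : |z - 1/2| ≤ 1/2}`. -/
def Xcl : Set ℂ := {z : ℂ | ‖z - 1/2‖ ≤ 1/2}

/-- The alphabet `I_τ = {m + nτ : m, n ∈ ℕ₊}`. -/
def Itau (τ : ℂ) : Set ℂ := {b : ℂ | ∃ m n : ℕ+, b = ((m : ℕ) : ℂ) + ((n : ℕ) : ℂ) * τ}

/-- The generator `φ_b(z) = 1/(z+b)`. -/
def phi (b z : ℂ) : ℂ := 1 / (z + b)

/-! The disc `X` lies in the strip `0 ≤ re`, `-1/2 ≤ im`, while every letter `b ∈ I_τ` has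
real and imaginary part at least `1`. Hence `z + b` lies in the quadrant `re ≥ 1`, `im ≥ 1/2`,
whose point closest to the origin is `1 + i/2`, of modulus `√(5/4)`. Inversion is
`1/(‖u‖‖v‖)`-Lipschitz between `u` and `v`, which gives the constant `4/5`. -/

lemma norm_inv_sub_inv_le {α : Type*} [NormedDivisionRing α] {c : ℝ} (hc : 0 < c) {u v : α}
    (hu : c ≤ ‖u‖) (hv : c ≤ ‖v‖) : ‖u⁻¹ - v⁻¹‖ ≤ ‖u - v‖ / c ^ 2 := by
  have hu0 : u ≠ 0 := norm_pos_iff.mp (hc.trans_le hu)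
  have hv0 : v ≠ 0 := norm_pos_iff.mp (hc.trans_le hv)
  rw [← dist_eq_norm, ← dist_eq_norm, dist_inv_inv₀ hu0 hv0, sq]
  exact div_le_div_of_nonneg_left dist_nonneg (mul_pos hc hc)
    (mul_le_mul hu hv hc.le (hc.trans_le hu).le)

lemma sqrt_five_div_four_le_norm {w : ℂ} (hre : 1 ≤ w.re) (him : 1 / 2 ≤ w.im) :
    Real.sqrt (5 / 4) ≤ ‖w‖ := by
  rw [Complex.norm_def]
  exact Real.sqrt_le_sqrt (by rw [normSq_apply]; nlinarith)

lemma re_nonneg_of_mem_Xcl {z : ℂ} (hz : z ∈ Xcl) : 0 ≤ z.re := by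
  have := (abs_re_le_norm (z - 1 / 2)).trans hz
  simp only [sub_re, div_ofNat_re, one_re] at this
  linarith [neg_abs_le (z.re - 1 / 2)]

lemma neg_half_le_im_of_mem_Xcl {z : ℂ} (hz : z ∈ Xcl) : -(1 / 2) ≤ z.im := by
  have := (abs_im_le_norm (z - 1 / 2)).trans hz
  simp only [sub_im, div_ofNat_im, one_im, zero_div, sub_zero] at this
  linarith [neg_abs_le z.im]

lemma one_le_re_of_mem_Itau {τ b : ℂ} (hτ : τ ∈ A0) (hb : b ∈ Itau τ) : 1 ≤ b.re := by
  obtain ⟨m, n, rfl⟩ := hb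
  have hm : (1 : ℝ) ≤ (m : ℕ) := by exact_mod_cast m.pos
  simp only [add_re, natCast_re, mul_re, natCast_im, zero_mul, sub_zero]
  nlinarith [hτ.1]

lemma one_le_im_of_mem_Itau {τ b : ℂ} (hτ : τ ∈ A0) (hb : b ∈ Itau τ) : 1 ≤ b.im := by
  obtain ⟨m, n, rfl⟩ := hb
  have hn : (1 : ℝ) ≤ (n : ℕ) := by exact_mod_cast n.pos
  simp only [add_im, natCast_im, mul_im, natCast_re, zero_mul, add_zero, zero_add]
  nlinarith [hτ.2]

lemma sqrt_five_div_four_le_norm_add {τ b z : ℂ} (hτ : τ ∈ A0) (hb : b ∈ Itau τ)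
    (hz : z ∈ Xcl) : Real.sqrt (5 / 4) ≤ ‖z + b‖ :=
  sqrt_five_div_four_le_norm
    (by rw [add_re]; linarith [re_nonneg_of_mem_Xcl hz, one_le_re_of_mem_Itau hτ hb])
    (by rw [add_im]; linarith [neg_half_le_im_of_mem_Xcl hz, one_le_im_of_mem_Itau hτ hb])

/-- Uniform contractivity of `S_τ` with contraction constant `4/5`. -/
theorem stmt1 :
    ∀ τ ∈ A0, ∀ b ∈ Itau τ, ∀ z ∈ Xcl, ∀ z' ∈ Xcl,
      Real.sqrt (5/4) ≤ ‖z + b‖ ∧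
      ‖1 / (z + b) - 1 / (z' + b)‖ ≤ (4/5) * ‖z - z'‖ := by
  intro τ hτ b hb z hz z' hz'
  have hzb := sqrt_five_div_four_le_norm_add hτ hb hz
  refine ⟨hzb, ?_⟩
  calc ‖1 / (z + b) - 1 / (z' + b)‖
      ≤ ‖(z + b) - (z' + b)‖ / Real.sqrt (5 / 4) ^ 2 := by
        simp only [one_div]
        exact norm_inv_sub_inv_le (by positivity) hzb (sqrt_five_div_four_le_norm_add hτ hb hz')
    _ = 4 / 5 * ‖z - z'‖ := by
        rw [add_sub_add_right_eq_sub, Real.sq_sqrt (by norm_num)]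
        ring
end
end

section
/- For every τ ∈ A₀ and every t ≥ 0, the series ψ_τ¹(t) := Σ_{b ∈ I_τ} ( sup_{z ∈ X} 1/|z + b|² )^{t} is finite if and only if t > 1. In particular θ_τ := inf{ t ≥ 0 : ψ_τ¹(t) < ∞ } = 1 and ψ_τ¹(θ_τ) = ∞, so the CIFS S_τ is hereditarily regular. -/
open Complex Metric Filter Set
open scoped ENNReal NNReal Topology

noncomputable section

/-- `ψ_τ¹(t) = Σ_{b ∈ I_τ} (sup_{z ∈ X} 1/|z+b|²)^t`, valued in `[0,∞]`. -/
def psi1 (τ : ℂ) (t : ℝ) : ℝ≥0∞ :=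
  ∑' b : Itau τ, (⨆ z ∈ Xcl, (1 / ((‖z + (b : ℂ)‖₊ : ℝ≥0∞) ^ 2))) ^ t

/-! For `b = m + nτ` with `τ ∈ A₀`, every `z ∈ X` has `Re (z + b) ≥ m` and `Im (z + b) ≥ n - 1/2`,
while `z = 0` gives `|b| ≤ (m + n)(1 + |τ|)`. Hence `sup_X 1/|z + b|² ≍ (m + n)⁻²`, and `ψ_τ¹(t)` is
finite exactly when `Σ_{m,n ≥ 1} (m + n)^(-2t)` is, i.e. when `t > 1`: from above this double
series is dominated by `Σ (mn)^(-t)`, a product of two `p`-series; from below, for `t ≤ 1`, the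
terms with `n ≤ m` alone contribute at least `1/(4m)` for each `m`. -/

namespace ENNReal

theorem rpow_le_rpow_of_nonpos {x y : ℝ≥0∞} {z : ℝ} (hxy : x ≤ y) (hz : z ≤ 0) :
    y ^ z ≤ x ^ z := by
  obtain ⟨w, rfl⟩ : ∃ w, z = -w := ⟨-z, (neg_neg z).symm⟩
  rw [rpow_neg, rpow_neg]
  exact ENNReal.inv_le_inv' (rpow_le_rpow hxy (by linarith))

theorem tsum_rpow_lt_top_iff_of_le_mul {α : Type*} {f g : α → ℝ≥0∞} {a b : ℝ≥0∞} {t : ℝ}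
    (ht : 0 ≤ t) (ha : a ≠ 0) (hb : b ≠ ⊤) (hgf : ∀ x, a * g x ≤ f x)
    (hfg : ∀ x, f x ≤ b * g x) :
    ∑' x, f x ^ t < ⊤ ↔ ∑' x, g x ^ t < ⊤ := by
  have hf_le : ∑' x, f x ^ t ≤ b ^ t * ∑' x, g x ^ t := by
    rw [← ENNReal.tsum_mul_left]
    exact ENNReal.tsum_le_tsum fun x ↦
      (rpow_le_rpow (hfg x) ht).trans_eq (mul_rpow_of_nonneg _ _ ht)
  have hg_le : a ^ t * ∑' x, g x ^ t ≤ ∑' x, f x ^ t := by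
    rw [← ENNReal.tsum_mul_left]
    exact ENNReal.tsum_le_tsum fun x ↦
      (mul_rpow_of_nonneg _ _ ht).symm.trans_le (rpow_le_rpow (hgf x) ht)
  have hat : a ^ t ≠ 0 := by simp [rpow_eq_zero_iff, ha, ht.not_gt]
  exact ⟨fun h ↦ lt_top_of_mul_ne_top_right (hg_le.trans_lt h).ne hat,
    fun h ↦ hf_le.trans_lt (mul_lt_top (rpow_lt_top_of_nonneg ht hb) h)⟩

theorem tsum_pnat_rpow_lt_top_iff {p : ℝ} :
    ∑' n : ℕ+, ((n : ℕ) : ℝ≥0∞) ^ p < ⊤ ↔ p < -1 := by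
  have hcoe (n : ℕ+) : ((n : ℕ) : ℝ≥0∞) ^ p = ((((n : ℕ) : ℝ≥0) ^ p : ℝ≥0) : ℝ≥0∞) := by
    rw [coe_rpow_of_ne_zero (by simp), coe_natCast]
  simp_rw [hcoe, lt_top_iff_ne_top, tsum_coe_ne_top_iff_summable_coe, NNReal.coe_rpow,
    NNReal.coe_natCast]
  exact (summable_pnat_iff_summable_nat (f := fun n : ℕ ↦ (n : ℝ) ^ p)).trans
    Real.summable_nat_rpow

theorem tsum_pnat_prod_add_rpow_lt_top {p : ℝ} (hp : p < -2) :
    ∑' q : ℕ+ × ℕ+, ((q.1 : ℕ) + (q.2 : ℕ) : ℝ≥0∞) ^ p < ⊤ := by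
  have hsplit (m n : ℕ+) :
      ((m : ℕ) + (n : ℕ) : ℝ≥0∞) ^ p ≤ ((m : ℕ) : ℝ≥0∞) ^ (p / 2) * ((n : ℕ) : ℝ≥0∞) ^ (p / 2) := by
    rw [← add_halves p, rpow_add _ _ (by simp) (by simp), add_halves]
    exact mul_le_mul' (rpow_le_rpow_of_nonpos le_self_add (by linarith))
      (rpow_le_rpow_of_nonpos le_add_self (by linarith))
  have hhalf := tsum_pnat_rpow_lt_top_iff.2 (by linarith : p / 2 < -1)
  calc ∑' q : ℕ+ × ℕ+, ((q.1 : ℕ) + (q.2 : ℕ) : ℝ≥0∞) ^ p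
      ≤ ∑' q : ℕ+ × ℕ+, ((q.1 : ℕ) : ℝ≥0∞) ^ (p / 2) * ((q.2 : ℕ) : ℝ≥0∞) ^ (p / 2) :=
        ENNReal.tsum_le_tsum fun q ↦ hsplit q.1 q.2
    _ = (∑' m : ℕ+, ((m : ℕ) : ℝ≥0∞) ^ (p / 2)) * ∑' n : ℕ+, ((n : ℕ) : ℝ≥0∞) ^ (p / 2) := by
        simp only [ENNReal.tsum_prod', ENNReal.tsum_mul_left, ENNReal.tsum_mul_right]
    _ < ⊤ := mul_lt_top hhalf hhalf

theorem inv_four_mul_rpow_neg_one_le_tsum_pnat_add (m : ℕ+) :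
    4⁻¹ * ((m : ℕ) : ℝ≥0∞) ^ (-1 : ℝ) ≤ ∑' n : ℕ+, ((m : ℕ) + (n : ℕ) : ℝ≥0∞) ^ (-2 : ℝ) := by
  have hm0 : ((m : ℕ) : ℝ≥0∞) ≠ 0 := by simp
  have hmtop : ((m : ℕ) : ℝ≥0∞) ≠ ⊤ := natCast_ne_top _
  have hterm (n : ℕ+) (hn : n ∈ Finset.Icc 1 m) :
      (2 * (m : ℕ) : ℝ≥0∞) ^ (-2 : ℝ) ≤ ((m : ℕ) + (n : ℕ) : ℝ≥0∞) ^ (-2 : ℝ) := by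
    refine rpow_le_rpow_of_nonpos ?_ (by norm_num)
    rw [two_mul]
    gcongr
    exact_mod_cast (Finset.mem_Icc.1 hn).2
  calc 4⁻¹ * ((m : ℕ) : ℝ≥0∞) ^ (-1 : ℝ)
      = (Finset.Icc 1 m).card • (2 * (m : ℕ) : ℝ≥0∞) ^ (-2 : ℝ) := by
        rw [PNat.card_Icc, nsmul_eq_mul, mul_rpow_of_ne_top (by simp) hmtop, ← mul_assoc,
          mul_comm _ ((2 : ℝ≥0∞) ^ _), mul_assoc]
        congr 1
        · rw [rpow_neg, rpow_two]; norm_num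
        · rw [PNat.one_coe, Nat.add_sub_cancel, show (-1 : ℝ) = 1 + -2 by norm_num,
            rpow_add _ _ hm0 hmtop, rpow_one]
    _ ≤ ∑ n ∈ Finset.Icc 1 m, ((m : ℕ) + (n : ℕ) : ℝ≥0∞) ^ (-2 : ℝ) :=
        Finset.card_nsmul_le_sum _ _ _ hterm
    _ ≤ _ := ENNReal.sum_le_tsum _

theorem tsum_pnat_prod_add_rpow_neg_two_eq_top :
    ∑' q : ℕ+ × ℕ+, ((q.1 : ℕ) + (q.2 : ℕ) : ℝ≥0∞) ^ (-2 : ℝ) = ⊤ := by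
  have hharmonic : ∑' m : ℕ+, ((m : ℕ) : ℝ≥0∞) ^ (-1 : ℝ) = ⊤ := by
    simpa using (tsum_pnat_rpow_lt_top_iff (p := -1)).not
  refine top_le_iff.1 ?_
  calc ⊤ = ∑' m : ℕ+, 4⁻¹ * ((m : ℕ) : ℝ≥0∞) ^ (-1 : ℝ) := by
        rw [ENNReal.tsum_mul_left, hharmonic, mul_top (by simp)]
    _ ≤ _ := by
        rw [ENNReal.tsum_prod']
        exact ENNReal.tsum_le_tsum inv_four_mul_rpow_neg_one_le_tsum_pnat_add

theorem tsum_pnat_prod_add_rpow_lt_top_iff {p : ℝ} :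
    ∑' q : ℕ+ × ℕ+, ((q.1 : ℕ) + (q.2 : ℕ) : ℝ≥0∞) ^ p < ⊤ ↔ p < -2 := by
  refine ⟨fun h ↦ ?_, tsum_pnat_prod_add_rpow_lt_top⟩
  by_contra! hp
  refine h.ne (top_le_iff.1 ?_)
  rw [← tsum_pnat_prod_add_rpow_neg_two_eq_top]
  exact ENNReal.tsum_le_tsum fun q ↦
    rpow_le_rpow_of_exponent_le (le_add_right (Nat.one_le_cast.2 q.1.pos)) hp

end ENNReal

theorem zero_mem_Xcl : (0 : ℂ) ∈ Xcl := by
  norm_num [Xcl]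

theorem re_nonneg_and_neg_half_le_im_of_mem_Xcl {z : ℂ} (hz : z ∈ Xcl) :
    0 ≤ z.re ∧ -(1 / 2) ≤ z.im := by
  have hre := (abs_le.1 ((Complex.abs_re_le_norm _).trans hz)).1
  have him := (abs_le.1 ((Complex.abs_im_le_norm _).trans hz)).1
  norm_num at hre him
  exact ⟨hre, him⟩

theorem natCast_add_le_four_mul_norm_add {τ z : ℂ} (hτ : τ ∈ A0) (hz : z ∈ Xcl) (m n : ℕ) :
    (m + n : ℝ) ≤ 4 * ‖z + (m + n * τ)‖ := by
  obtain ⟨hzre, hzim⟩ := re_nonneg_and_neg_half_le_im_of_mem_Xcl hz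
  have hre := Complex.re_le_norm (z + (m + n * τ))
  have him := Complex.im_le_norm (z + (m + n * τ))
  simp only [add_re, add_im, mul_re, mul_im, natCast_re, natCast_im, zero_mul, sub_zero,
    add_zero, zero_add] at hre him
  have hnre : 0 ≤ (n : ℝ) * τ.re := mul_nonneg n.cast_nonneg hτ.1
  have hnim : (n : ℝ) ≤ n * τ.im := le_mul_of_one_le_right n.cast_nonneg hτ.2
  rcases Nat.eq_zero_or_pos (m + n) with h | h
  · obtain ⟨rfl, rfl⟩ := Nat.add_eq_zero_iff.1 h
    simp
  · have : (1 : ℝ) ≤ m + n := by exact_mod_cast h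
    linarith

theorem norm_natCast_add_natCast_mul_le (τ : ℂ) (m n : ℕ) :
    ‖(m + n * τ : ℂ)‖ ≤ (m + n) * (1 + ‖τ‖) := by
  calc ‖(m + n * τ : ℂ)‖ ≤ m + n * ‖τ‖ := by
        simpa using norm_add_le (m : ℂ) (n * τ)
    _ ≤ (m + n) * (1 + ‖τ‖) := by nlinarith [norm_nonneg τ, m.cast_nonneg (α := ℝ)]

/-- `‖φ_b′‖_X`, the supremum over `X` of `|φ_b′(z)| = 1/|z + b|²`. -/
def phiDerivSup (b : ℂ) : ℝ≥0∞ := ⨆ z ∈ Xcl, 1 / (‖z + b‖₊ : ℝ≥0∞) ^ 2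

theorem phiDerivSup_le {τ : ℂ} (hτ : τ ∈ A0) (m n : ℕ) :
    phiDerivSup (m + n * τ) ≤ 16 * (((m + n : ℕ) : ℝ≥0∞) ^ 2)⁻¹ := by
  refine iSup₂_le fun z hz ↦ ?_
  have hle : ((m + n : ℕ) : ℝ≥0∞) ≤ 4 * ‖z + (m + n * τ)‖ₑ := by
    rw [← ofReal_norm, ← ENNReal.ofReal_natCast, ← ENNReal.ofReal_ofNat,
      ← ENNReal.ofReal_mul (by norm_num)]
    exact ENNReal.ofReal_le_ofReal (by exact_mod_cast natCast_add_le_four_mul_norm_add hτ hz m n)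
  calc 1 / (‖z + (m + n * τ)‖₊ : ℝ≥0∞) ^ 2 = 16 * ((4 * ‖z + (m + n * τ)‖ₑ) ^ 2)⁻¹ := by
        rw [mul_pow, ENNReal.mul_inv (by norm_num) (by norm_num), ← mul_assoc]
        norm_num [ENNReal.mul_inv_cancel, enorm_eq_nnnorm]
    _ ≤ 16 * (((m + n : ℕ) : ℝ≥0∞) ^ 2)⁻¹ := by gcongr

theorem inv_sq_mul_inv_sq_le_phiDerivSup (τ : ℂ) (m n : ℕ) :
    ((1 + ‖τ‖ₑ) ^ 2)⁻¹ * (((m + n : ℕ) : ℝ≥0∞) ^ 2)⁻¹ ≤ phiDerivSup (m + n * τ) := by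
  have hle : ‖(m + n * τ : ℂ)‖ₑ ≤ (1 + ‖τ‖ₑ) * ((m + n : ℕ) : ℝ≥0∞) := by
    rw [← ofReal_norm, ← ofReal_norm, ← ENNReal.ofReal_natCast, ← ENNReal.ofReal_one,
      ← ENNReal.ofReal_add zero_le_one (norm_nonneg _), ← ENNReal.ofReal_mul (by positivity)]
    refine ENNReal.ofReal_le_ofReal ?_
    exact (norm_natCast_add_natCast_mul_le τ m n).trans_eq (by push_cast; ring)
  calc ((1 + ‖τ‖ₑ) ^ 2)⁻¹ * (((m + n : ℕ) : ℝ≥0∞) ^ 2)⁻¹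
      = (((1 + ‖τ‖ₑ) * ((m + n : ℕ) : ℝ≥0∞)) ^ 2)⁻¹ := by
        rw [mul_pow, ENNReal.mul_inv (Or.inl (by simp)) (Or.inl (by simp))]
    _ ≤ 1 / (‖0 + (m + n * τ)‖₊ : ℝ≥0∞) ^ 2 := by
        rw [zero_add, one_div]
        gcongr
        exact hle
    _ ≤ phiDerivSup (m + n * τ) :=
        le_iSup₂ (f := fun z _ ↦ 1 / (‖z + (m + n * τ)‖₊ : ℝ≥0∞) ^ 2) 0 zero_mem_Xcl

theorem psi1_eq_tsum_pnat_prod {τ : ℂ} (hτ : τ.im ≠ 0) (t : ℝ) :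
    psi1 τ t = ∑' q : ℕ+ × ℕ+, phiDerivSup ((q.1 : ℕ) + (q.2 : ℕ) * τ) ^ t := by
  set g : ℕ+ × ℕ+ → ℂ := fun q ↦ ((q.1 : ℕ) : ℂ) + ((q.2 : ℕ) : ℂ) * τ
  have hg : Function.Injective g := by
    rintro ⟨m, n⟩ ⟨m', n'⟩ h
    have him := congrArg Complex.im h
    simp only [g, add_im, mul_im, natCast_re, natCast_im, zero_mul, add_zero, zero_add] at him
    obtain rfl : n = n' := by exact_mod_cast mul_right_cancel₀ hτ him
    obtain rfl : m = m' := by exact_mod_cast add_right_cancel h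
    rfl
  have hrange : Itau τ = range g := by
    ext b
    simp [Itau, g, eq_comm]
  rw [psi1, hrange]
  exact tsum_range (fun b ↦ phiDerivSup b ^ t) hg

theorem psi1_lt_top_iff {τ : ℂ} (hτ : τ ∈ A0) {t : ℝ} (ht : 0 ≤ t) :
    psi1 τ t < ⊤ ↔ 1 < t := by
  rw [psi1_eq_tsum_pnat_prod (zero_lt_one.trans_le hτ.2).ne']
  refine (ENNReal.tsum_rpow_lt_top_iff_of_le_mul
    (f := fun q : ℕ+ × ℕ+ ↦ phiDerivSup ((q.1 : ℕ) + (q.2 : ℕ) * τ))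
    (g := fun q ↦ ((((q.1 : ℕ) + (q.2 : ℕ) : ℕ) : ℝ≥0∞) ^ 2)⁻¹) ht (by simp) (by simp)
    (fun q ↦ inv_sq_mul_inv_sq_le_phiDerivSup τ q.1 q.2)
    (fun q ↦ phiDerivSup_le hτ q.1 q.2)).trans ?_
  have hpow (k : ℝ≥0∞) : ((k ^ 2)⁻¹) ^ t = k ^ (-2 * t) := by
    rw [ENNReal.inv_rpow, ← ENNReal.rpow_natCast, ← ENNReal.rpow_mul, ← ENNReal.rpow_neg]
    norm_num
  simp_rw [hpow, Nat.cast_add, ENNReal.tsum_pnat_prod_add_rpow_lt_top_iff]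
  constructor <;> intro h <;> linarith

/-- `ψ_τ¹(t) < ∞ ↔ t > 1`; hence `θ_τ = 1` and `ψ_τ¹(θ_τ) = ∞`
(so that `S_τ` is hereditarily regular). -/
theorem stmt7 :
    ∀ τ ∈ A0,
      (∀ t : ℝ, 0 ≤ t → (psi1 τ t < ⊤ ↔ 1 < t)) ∧
      sInf {t : ℝ | 0 ≤ t ∧ psi1 τ t < ⊤} = 1 ∧
      psi1 τ 1 = ⊤ := by
  intro τ hτ
  have hfinite : {t : ℝ | 0 ≤ t ∧ psi1 τ t < ⊤} = Ioi 1 := by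
    ext t
    simp only [mem_ofPred_eq, mem_Ioi]
    exact ⟨fun ⟨ht, h⟩ ↦ (psi1_lt_top_iff hτ ht).1 h,
      fun h ↦ ⟨by linarith, (psi1_lt_top_iff hτ (by linarith)).2 h⟩⟩
  refine ⟨fun t ht ↦ psi1_lt_top_iff hτ ht, by rw [hfinite, csInf_Ioi], ?_⟩
  simpa using (psi1_lt_top_iff hτ zero_le_one).not
end
end
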